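/- Let M be the free k[[t]]-module with basis m_1,…,m_{e+1}, regarded as a representation of Q_e over k[[t]] with m_j in the vertex-j component for 1 ≤ j ≤ e−1 and m_e, m_{e+1} in the vertex-e component, and with structure maps α_j(m_j) = m_{j+1} for 1 ≤ j ≤ e−2, α_{e−1}(m_{e−1}) = t·m_{e+1}, α_e(m_e) = m_1, α_e(m_{e+1}) = 0, δ(m_e) = m_{e+1}, δ(m_{e+1}) = 0. Then: (i) these maps satisfy the defining relations of Λ_e, so M is a k[[t]] ⊗_k Λ_e-module that is free as a k[[t]]-module; (ii) M/tM is isomorphic to W as a Λ_e-module; (iii) M/t²M is not isomorphic to the trivial lift (k[t]/(t²)) ⊗_k W as a (k[t]/(t²)) ⊗_k Λ_e-module. -/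

import Mathlib

/-! Common framework: representations of the quiver Q_e / modules over the
generalized Brauer star algebra Λ_e, encoded as a module `V` together with
endomorphisms `v i` (images of the vertex idempotents), `a i` (images of the
arrows; `a i` is the arrow leaving vertex `i`, with `a ⟨e-1⟩` the arrow
`α_e : e → 1`) and `d` (image of the loop `δ`). -/

namespace GBTA

structure PreRep (R : Type) [CommRing R] (e : ℕ) : Type 1 where
  V : Type
  [instAdd : AddCommGroup V]
  [instMod : Module R V]
  v : Fin e → Module.End R V
  a : Fin e → Module.End R V
  d : Module.End R V

attribute [instance] PreRep.instAdd PreRep.instMod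

variable {R : Type} [CommRing R] {e : ℕ}

/-- The (0-based) index of the vertex `e`. -/
def ve (e : ℕ) [NeZero e] : Fin e :=
  ⟨e - 1, by have := Nat.pos_of_ne_zero (NeZero.ne e); omega⟩

/-- The (0-based) index of the vertex `e - 1`. -/
def vem (e : ℕ) [NeZero e] : Fin e :=
  ⟨e - 2, by have := Nat.pos_of_ne_zero (NeZero.ne e); omega⟩

/-- The cycle `C_i`: the composite of the `e` cyclically consecutive arrows
starting with the arrow leaving vertex `i` (composites written right to left). -/
def cyc [NeZero e] (ρ : PreRep R e) (i : Fin e) : Module.End R ρ.V :=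
  (((List.range e).reverse).map fun l => ρ.a (i + Fin.ofNat e l)).prod

/-- The defining relations of the generalized Brauer star algebra `Λ_e`. -/
def Satisfies [NeZero e] (ρ : PreRep R e) : Prop :=
  (∀ i j : Fin e, i ≠ j → ρ.v i * ρ.v j = 0) ∧
  (∀ i : Fin e, ρ.v i * ρ.v i = ρ.v i) ∧
  ((∑ i : Fin e, ρ.v i) = 1) ∧
  (∀ i : Fin e, ρ.a i = ρ.v (i + 1) * ρ.a i * ρ.v i) ∧
  (ρ.d = ρ.v (ve e) * ρ.d * ρ.v (ve e)) ∧
  (ρ.d * ρ.a (vem e) = 0) ∧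
  (ρ.a (ve e) * ρ.d = 0) ∧
  (ρ.d * ρ.d = cyc ρ (ve e) * cyc ρ (ve e)) ∧
  (∀ i : Fin e, i ≠ ve e → ρ.a i * (cyc ρ i * cyc ρ i) = 0)

/-- The space of `Λ_e`-module homomorphisms `ρ → σ`: linear maps commuting with
all the structure maps. -/
def homSet (ρ σ : PreRep R e) : Submodule R (ρ.V →ₗ[R] σ.V) where
  carrier := {f | (∀ i, f ∘ₗ ρ.v i = σ.v i ∘ₗ f) ∧ (∀ i, f ∘ₗ ρ.a i = σ.a i ∘ₗ f) ∧
    f ∘ₗ ρ.d = σ.d ∘ₗ f}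
  add_mem' := by
    rintro f g ⟨hfv, hfa, hfd⟩ ⟨hgv, hga, hgd⟩
    exact ⟨fun i => by simp only [LinearMap.add_comp, LinearMap.comp_add, hfv i, hgv i],
      fun i => by simp only [LinearMap.add_comp, LinearMap.comp_add, hfa i, hga i],
      by simp only [LinearMap.add_comp, LinearMap.comp_add, hfd, hgd]⟩
  zero_mem' := ⟨fun i => by simp, fun i => by simp, by simp⟩
  smul_mem' := by
    rintro c f ⟨hfv, hfa, hfd⟩
    exact ⟨fun i => by simp only [LinearMap.smul_comp, LinearMap.comp_smul, hfv i],
      fun i => by simp only [LinearMap.smul_comp, LinearMap.comp_smul, hfa i],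
      by simp only [LinearMap.smul_comp, LinearMap.comp_smul, hfd]⟩

/-- Projectivity of a `Λ_e`-module, via the lifting property in the category of
`Λ_e`-modules. -/
def IsProjective [NeZero e] (P : PreRep R e) : Prop :=
  Satisfies P ∧
  ∀ (A B : PreRep R e), Satisfies A → Satisfies B →
    ∀ p ∈ homSet A B, Function.Surjective p →
      ∀ g ∈ homSet P B, ∃ h ∈ homSet P A, p ∘ₗ h = g

/-- An endomorphism `f` of `ρ` factors through a projective `Λ_e`-module. -/
def FactorsThroughProjective [NeZero e] (ρ : PreRep R e) (f : ρ.V →ₗ[R] ρ.V) : Prop :=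
  ∃ P : PreRep R e, IsProjective P ∧ ∃ g ∈ homSet ρ P, ∃ h ∈ homSet P ρ, f = h ∘ₗ g

/-- "The stable endomorphism ring of `ρ` is isomorphic to the scalars": the identity
does not factor through a projective, and modulo endomorphisms factoring through
projectives every endomorphism is a scalar multiple of the identity. -/
def StableEndIsoScalars [NeZero e] (ρ : PreRep R e) : Prop :=
  (¬ FactorsThroughProjective ρ LinearMap.id) ∧
  ∀ f ∈ homSet ρ ρ, ∃ c : R, FactorsThroughProjective ρ (f - c • LinearMap.id)

/-- The linear map on `Fin m → W` sending the `src` coordinate to the `dst`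
coordinate through `g`, and killing all other coordinates. -/
def mk1 {m : ℕ} {W : Type} [AddCommGroup W] [Module R W] (src dst : Fin m)
    (g : W →ₗ[R] W) : (Fin m → W) →ₗ[R] (Fin m → W) where
  toFun x := fun r => if r = dst then g (x src) else 0
  map_add' x y := by funext r; by_cases h : r = dst <;> simp [h]
  map_smul' c x := by funext r; by_cases h : r = dst <;> simp [h]

/-- Projection onto the coordinates satisfying `S`. -/
def prj {m : ℕ} {W : Type} [AddCommGroup W] [Module R W] (S : Fin m → Prop)
    [DecidablePred S] : (Fin m → W) →ₗ[R] (Fin m → W) where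
  toFun x := fun r => if S r then x r else 0
  map_add' x y := by funext r; by_cases h : S r <;> simp [h]
  map_smul' c x := by funext r; by_cases h : S r <;> simp [h]

/-- Last row index (`e`, 0-based) among `e+1` rows. -/
def lastRow (e : ℕ) : Fin (e + 1) := ⟨e, Nat.lt_succ_self e⟩

/-- Second-to-last row index (`e-1`, 0-based) among `e+1` rows. -/
def sndRow (e : ℕ) : Fin (e + 1) := ⟨e - 1, by omega⟩

/-- The vertex carrying each of the `e+1` rows: row `r < e-1` sits at vertex `r`,
rows `e-1` and `e` sit at the vertex `e` (0-based index `e-1`). -/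
def vrt (e : ℕ) [NeZero e] : Fin (e + 1) → Fin e := fun r =>
  if h : r.val < e - 1 then ⟨r.val, by omega⟩ else ve e


/-- The `n × n` Jordan block with eigenvalue `lam`. -/
def jordan (R : Type) [CommRing R] (n : ℕ) (lam : R) : Matrix (Fin n) (Fin n) R :=
  Matrix.of fun i j => if i = j then lam else if (j : ℕ) = (i : ℕ) + 1 then 1 else 0

/-- The band module `B(n, lam)`. Rows `0, …, e-2` are the components `k^n` at the
vertices `1, …, e-1`; rows `e-1` and `e` are the two copies of `k^n` at vertex `e`. -/
@[reducible] def band (R : Type) [CommRing R] (e : ℕ) [NeZero e] (n : ℕ) (lam : R) : PreRep R e where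
  V := Fin (e + 1) → Fin n → R
  v i := prj fun r => vrt e r = i
  a j :=
    if j.val = e - 1 then mk1 (sndRow e) ⟨0, by omega⟩ LinearMap.id
    else if j.val = e - 2 then mk1 ⟨e - 2, by omega⟩ (lastRow e) LinearMap.id
    else mk1 ⟨j.val, Nat.lt_succ_of_lt j.isLt⟩ ⟨j.val + 1, Nat.succ_lt_succ j.isLt⟩ LinearMap.id
  d := mk1 (sndRow e) (lastRow e) (Matrix.mulVecLin (jordan R n lam))

/-- The band module `B(1, s)` (with `δ` acting through the scalar `s`); the standard
basis vector `c_i` (`1 ≤ i ≤ e-1`) is the `i-1`-st coordinate, `c_e` the `e-1`-st and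
`c_{e+1}` the `e`-th. -/
@[reducible] def band1 (R : Type) [CommRing R] (e : ℕ) [NeZero e] (s : R) : PreRep R e where
  V := Fin (e + 1) → R
  v i := prj fun r => vrt e r = i
  a j :=
    if j.val = e - 1 then mk1 (sndRow e) ⟨0, by omega⟩ LinearMap.id
    else if j.val = e - 2 then mk1 ⟨e - 2, by omega⟩ (lastRow e) LinearMap.id
    else mk1 ⟨j.val, Nat.lt_succ_of_lt j.isLt⟩ ⟨j.val + 1, Nat.succ_lt_succ j.isLt⟩ LinearMap.id
  d := mk1 (sndRow e) (lastRow e) (s • LinearMap.id)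

/-- The projective module `P_e`, with basis `b_{i,1}, b_{i,2}` (row `i-1`) for
`1 ≤ i ≤ e-1` and `b_{e,1}, b_{e,2}` (row `e-1`), `b_{e,3}, b_{e,4}` (row `e`). -/
@[reducible] def Pe (R : Type) [CommRing R] (e : ℕ) [NeZero e] : PreRep R e where
  V := Fin (e + 1) → Fin 2 → R
  v i := prj fun r => vrt e r = i
  a j :=
    if j.val = e - 1 then mk1 (sndRow e) ⟨0, by omega⟩ LinearMap.id
    else if j.val = e - 2 then
      mk1 ⟨e - 2, by omega⟩ (sndRow e) (Matrix.mulVecLin !![0, 0; 1, 0])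
        + mk1 ⟨e - 2, by omega⟩ (lastRow e) (Matrix.mulVecLin !![0, 0; 0, 1])
    else mk1 ⟨j.val, Nat.lt_succ_of_lt j.isLt⟩ ⟨j.val + 1, Nat.succ_lt_succ j.isLt⟩ LinearMap.id
  d := mk1 (sndRow e) (lastRow e) (Matrix.mulVecLin !![1, 0; 0, 0])
    + mk1 (lastRow e) (lastRow e) (Matrix.mulVecLin !![0, 0; 1, 0])

/-- `Mdef R e τ`: the representation with basis `m_1, …, m_{e+1}` (rows `0, …, e`),
`α_j(m_j) = m_{j+1}` for `j ≤ e-2`, `α_{e-1}(m_{e-1}) = τ · m_{e+1}`,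
`α_e(m_e) = m_1`, `δ(m_e) = m_{e+1}`.  For `τ = 0` this is the string module `W`. -/
@[reducible] def Mdef (R : Type) [CommRing R] (e : ℕ) [NeZero e] (t : R) : PreRep R e where
  V := Fin (e + 1) → R
  v i := prj fun r => vrt e r = i
  a j :=
    if j.val = e - 1 then mk1 (sndRow e) ⟨0, by omega⟩ LinearMap.id
    else if j.val = e - 2 then mk1 ⟨e - 2, by omega⟩ (lastRow e) (t • LinearMap.id)
    else mk1 ⟨j.val, Nat.lt_succ_of_lt j.isLt⟩ ⟨j.val + 1, Nat.succ_lt_succ j.isLt⟩ LinearMap.id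
  d := mk1 (sndRow e) (lastRow e) LinearMap.id

/-- The uniserial module `U_{[i,j]}` (with `1 ≤ i ≤ j ≤ e`, 1-based). -/
@[reducible] def U (R : Type) [CommRing R] (e i j : ℕ) : PreRep R e where
  V := Fin (j + 1 - i) → R
  v t := prj fun r => i - 1 + r.val = t.val
  a t :=
    if h : i ≤ t.val + 1 ∧ t.val + 1 ≤ j - 1 then
      mk1 ⟨t.val + 1 - i, by omega⟩ ⟨t.val + 2 - i, by omega⟩ LinearMap.id
    else 0
  d := 0

/-- The uniserial projective module `P_i` (`i0` is the 0-based index of the vertex),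
with basis `p_0, …, p_{2e}` following the cycle of arrows twice around. -/
@[reducible] def Puni (R : Type) [CommRing R] (e : ℕ) [NeZero e] (i0 : ℕ) : PreRep R e where
  V := Fin (2 * e + 1) → R
  v t := prj fun r => (i0 + r.val) % e = t.val
  a t := ∑ l : Fin (2 * e),
    if (i0 + l.val) % e = t.val then mk1 l.castSucc l.succ LinearMap.id else 0
  d := 0

/-- The simple module `S_e` at the vertex `e`. -/
@[reducible] def Se (R : Type) [CommRing R] (e : ℕ) [NeZero e] : PreRep R e where
  V := R
  v i := if i = ve e then 1 else 0
  a _ := 0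
  d := 0

/-- Block upper triangular endomorphism `(x, y) ↦ (f x + θ y, f y)` of `V × V`. -/
def blk {V : Type} [AddCommGroup V] [Module R V] (f th : Module.End R V) :
    Module.End R (V × V) where
  toFun p := (f p.1 + th p.2, f p.2)
  map_add' p q := by
    simp only [Prod.fst_add, Prod.snd_add, map_add, Prod.mk_add_mk, Prod.mk.injEq, and_true]
    abel
  map_smul' c p := by
    simp only [Prod.smul_fst, Prod.smul_snd, map_smul, Prod.smul_mk, Prod.mk.injEq,
      smul_add, RingHom.id_apply, and_self]

section Ext
variable [NeZero e]

/-- The data of a self-extension of `ρ`: for each generator of `Λ_e`, the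
off-diagonal block of its action on `ρ.V × ρ.V`. -/
abbrev Cochain (ρ : PreRep R e) : Type :=
  (Fin e → Module.End R ρ.V) × (Fin e → Module.End R ρ.V) × Module.End R ρ.V

/-- The self-extension of `ρ` determined by the cochain `θ`. -/
@[reducible] def extRep (ρ : PreRep R e) (th : Cochain ρ) : PreRep R e where
  V := ρ.V × ρ.V
  v i := blk (ρ.v i) (th.1 i)
  a i := blk (ρ.a i) (th.2.1 i)
  d := blk ρ.d th.2.2

/-- `θ` is a cocycle precisely when the corresponding extension is a `Λ_e`-module. -/
def IsCocycle (ρ : PreRep R e) (th : Cochain ρ) : Prop := Satisfies (extRep ρ th)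

/-- The coboundary of `φ`; extensions differing by a coboundary are equivalent. -/
def bnd (ρ : PreRep R e) (phi : Module.End R ρ.V) : Cochain ρ :=
  (fun i => ρ.v i * phi - phi * ρ.v i, fun i => ρ.a i * phi - phi * ρ.a i,
    ρ.d * phi - phi * ρ.d)

/-- `Ext¹_{Λ_e}(ρ, ρ)`, i.e. the space of self-extensions of `ρ` modulo equivalence
(equivalently cocycles modulo coboundaries), is one-dimensional. -/
def ExtSelfOneDimensional (ρ : PreRep R e) : Prop :=
  ∃ th0 : Cochain ρ, IsCocycle ρ th0 ∧ (∀ phi, th0 ≠ bnd ρ phi) ∧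
    ∀ th : Cochain ρ, IsCocycle ρ th → ∃ (c : R) (phi : Module.End R ρ.V),
      th = c • th0 + bnd ρ phi

end Ext


/-- The endomorphism algebra of a representation. -/
def endAlg (ρ : PreRep R e) : Subalgebra R (Module.End R ρ.V) where
  carrier := {f | (∀ i, f * ρ.v i = ρ.v i * f) ∧ (∀ i, f * ρ.a i = ρ.a i * f) ∧
    f * ρ.d = ρ.d * f}
  mul_mem' := by
    rintro f g ⟨hfv, hfa, hfd⟩ ⟨hgv, hga, hgd⟩
    refine ⟨fun i => ?_, fun i => ?_, ?_⟩
    · rw [mul_assoc, hgv i, ← mul_assoc, hfv i, mul_assoc]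
    · rw [mul_assoc, hga i, ← mul_assoc, hfa i, mul_assoc]
    · rw [mul_assoc, hgd, ← mul_assoc, hfd, mul_assoc]
  one_mem' := ⟨fun i => by rw [one_mul, mul_one], fun i => by rw [one_mul, mul_one],
    by rw [one_mul, mul_one]⟩
  add_mem' := by
    rintro f g ⟨hfv, hfa, hfd⟩ ⟨hgv, hga, hgd⟩
    exact ⟨fun i => by rw [add_mul, mul_add, hfv i, hgv i],
      fun i => by rw [add_mul, mul_add, hfa i, hga i],
      by rw [add_mul, mul_add, hfd, hgd]⟩
  zero_mem' := ⟨fun i => by rw [zero_mul, mul_zero], fun i => by rw [zero_mul, mul_zero],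
    by rw [zero_mul, mul_zero]⟩
  algebraMap_mem' c :=
    ⟨fun i => Algebra.commutes c (ρ.v i), fun i => Algebra.commutes c (ρ.a i),
      Algebra.commutes c ρ.d⟩

/-- The endomorphism `τ` of `B(1,λ)` (and of `W`): `c_e ↦ c_{e+1}`, all other
standard basis vectors to `0`. -/
def tau (R : Type) [CommRing R] (e : ℕ) : (Fin (e + 1) → R) →ₗ[R] (Fin (e + 1) → R) :=
  mk1 (sndRow e) (lastRow e) LinearMap.id

/-- The map `r₁ : B(1,λ) → P_e` (with parameter `μ` the coefficient on `b_{e,3}`):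
`c_i ↦ b_{i,2}` for `1 ≤ i ≤ e-1`, `c_e ↦ b_{e,2} + μ b_{e,3}`, `c_{e+1} ↦ b_{e,4}`. -/
def r1 (R : Type) [CommRing R] (e : ℕ) (mu : R) :
    (Fin (e + 1) → R) →ₗ[R] (Fin (e + 1) → Fin 2 → R) where
  toFun x := fun r c => if c = 1 then x r else if r = lastRow e then mu * x (sndRow e) else 0
  map_add' x y := by
    funext r c
    by_cases h : c = 1
    · simp [h]
    · by_cases h2 : r = lastRow e <;> simp [h, h2, mul_add]
  map_smul' t x := by
    funext r c
    by_cases h : c = 1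
    · simp [h]
    · by_cases h2 : r = lastRow e <;> simp [h, h2] <;> ring

/-- The map `r₂ : B(1,λ) → P_e`: `c_e ↦ b_{e,4}`, all other basis vectors to `0`. -/
def r2 (R : Type) [CommRing R] (e : ℕ) :
    (Fin (e + 1) → R) →ₗ[R] (Fin (e + 1) → Fin 2 → R) where
  toFun x := fun r c => if r = lastRow e ∧ c = 1 then x (sndRow e) else 0
  map_add' x y := by
    funext r c
    by_cases h : r = lastRow e ∧ c = 1 <;> simp [h]
  map_smul' t x := by
    funext r c
    by_cases h : r = lastRow e ∧ c = 1 <;> simp [h]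

/-- The map `s₁ : P_e → B(1,λ)`: `b_{e,1} ↦ c_e`, `b_{e,2} ↦ c_{e+1}`,
`b_{e,3} ↦ λ c_{e+1}`, `b_{i,1} ↦ c_i`; zero on `b_{e,4}` and the `b_{i,2}`. -/
def s1 (R : Type) [CommRing R] (e : ℕ) (lam : R) :
    (Fin (e + 1) → Fin 2 → R) →ₗ[R] (Fin (e + 1) → R) where
  toFun y := fun r =>
    if r = lastRow e then y (sndRow e) 1 + lam * y (lastRow e) 0 else y r 0
  map_add' x y := by
    funext r
    by_cases h : r = lastRow e <;> simp [h, mul_add] <;> ring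
  map_smul' t x := by
    funext r
    by_cases h : r = lastRow e <;> simp [h] <;> ring

/-- The map `s₂ : P_e → B(1,λ)`: `b_{e,1} ↦ c_{e+1}`, all other basis vectors to `0`. -/
def s2 (R : Type) [CommRing R] (e : ℕ) :
    (Fin (e + 1) → Fin 2 → R) →ₗ[R] (Fin (e + 1) → R) where
  toFun y := fun r => if r = lastRow e then y (sndRow e) 0 else 0
  map_add' x y := by funext r; by_cases h : r = lastRow e <;> simp [h]
  map_smul' t x := by funext r; by_cases h : r = lastRow e <;> simp [h]

/-- The map `g : W → P_e`, `w_e ↦ b_{e,3}`, `w_{e+1} ↦ b_{e,4}`, `w_j ↦ 0`. -/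
def gW (R : Type) [CommRing R] (e : ℕ) :
    (Fin (e + 1) → R) →ₗ[R] (Fin (e + 1) → Fin 2 → R) where
  toFun x := fun r c =>
    if r = lastRow e then (if c = 0 then x (sndRow e) else x (lastRow e)) else 0
  map_add' x y := by
    funext r c
    by_cases h : r = lastRow e <;> by_cases h2 : c = 0 <;> simp [h, h2]
  map_smul' t x := by
    funext r c
    by_cases h : r = lastRow e <;> by_cases h2 : c = 0 <;> simp [h, h2]

/-- The map `h : P_e → W`, `b_{e,1} ↦ w_e`, `b_{j,1} ↦ w_j`, `b_{e,3} ↦ w_{e+1}`,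
zero on `b_{e,2}`, `b_{e,4}` and the `b_{j,2}`. -/
def hW (R : Type) [CommRing R] (e : ℕ) :
    (Fin (e + 1) → Fin 2 → R) →ₗ[R] (Fin (e + 1) → R) where
  toFun y := fun r => y r 0
  map_add' x y := rfl
  map_smul' t x := rfl


/-- `k[t]/(t²)`. -/
noncomputable abbrev Rtwo (k : Type) [Field k] : Type :=
  Polynomial k ⧸ Ideal.span {(Polynomial.X : Polynomial k) ^ 2}

/-- The class of `t` in `k[t]/(t²)`. -/
noncomputable def th2 (k : Type) [Field k] : Rtwo k :=
  Ideal.Quotient.mk _ Polynomial.X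

/-! In `M` the arrow `α_{e-1}` lands in `k[[t]] m_{e+1}`, which `α_e` kills, so the path
`α_e α_{e-1}` acts as zero for every value of `t`. Each cycle `C_i` with `i ≠ e` runs through
this path, and so does `C_e²`; hence all relations involving cycles hold because both sides
vanish. Reduction modulo `t` is the constant coefficient, and turns `t` into `0`. Modulo `t²`,
`α_{e-1}` sends `m_{e-1}` to the nonzero element `t m_{e+1}`, whereas it acts as zero on the
trivial lift; a homomorphism intertwining the two therefore kills `t m_{e+1}` and cannot be
injective. -/

section CyclicProducts

lemma prod_map_reverse_range_eq_zero {M : Type*} [MonoidWithZero M] (f : ℕ → M) {n l : ℕ}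
    (hl : l + 1 < n) (h : f (l + 1) * f l = 0) : ((List.range n).reverse.map f).prod = 0 := by
  induction n with
  | zero => omega
  | succ n ih =>
    rw [List.range_succ, List.reverse_append, List.map_append, List.prod_append]
    rcases Nat.lt_or_ge (l + 1) n with hn | hn
    · rw [ih hn, mul_zero]
    · obtain rfl : n = l + 1 := by omega
      rw [List.range_succ, List.reverse_append, List.map_append, List.prod_append]
      simp only [List.reverse_singleton, List.map_cons, List.map_nil, List.prod_singleton]
      rw [← mul_assoc, h, zero_mul]

variable [NeZero e]

open Fin.NatCast in
theorem _root_.Fin.ofNat_add_one (l : ℕ) : Fin.ofNat e (l + 1) = Fin.ofNat e l + 1 := by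
  change ((l + 1 : ℕ) : Fin e) = (l : Fin e) + 1
  push_cast
  rfl

open Fin.NatCast in
theorem _root_.Fin.ofNat_self_add (l : ℕ) : Fin.ofNat e (e + l) = Fin.ofNat e l := by
  change ((e + l : ℕ) : Fin e) = (l : Fin e)
  simp

lemma cyc_mul_self (ρ : PreRep R e) (i : Fin e) :
    cyc ρ i * cyc ρ i =
      ((List.range (e + e)).reverse.map fun l => ρ.a (i + Fin.ofNat e l)).prod := by
  simp only [cyc, List.range_add, List.reverse_append, List.map_append, List.prod_append,
    List.map_reverse, List.map_map, Function.comp_def, Fin.ofNat_self_add]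

lemma cyc_eq_zero_of_ne (ρ : PreRep R e) {i j : Fin e} (h : ρ.a (j + 1) * ρ.a j = 0)
    (hi : i ≠ j + 1) : cyc ρ i = 0 := by
  have hj : i + Fin.ofNat e (j - i).val = j := by simp
  have hj1 : i + Fin.ofNat e ((j - i).val + 1) = j + 1 := by
    rw [Fin.ofNat_add_one, ← add_assoc, hj]
  refine prod_map_reverse_range_eq_zero _ (l := (j - i).val) ?_ (by rw [hj1, hj]; exact h)
  by_contra hl
  obtain he : (j - i).val + 1 = e := by have := (j - i).isLt; omega
  rw [he, show Fin.ofNat e e = 0 by simp, add_zero] at hj1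
  exact hi hj1

/-- `C_{j+1}` begins with `α_{j+1}` and ends with `α_j`, so its square passes through
`α_{j+1} α_j` where the two copies meet. -/
lemma cyc_mul_self_eq_zero (ρ : PreRep R e) {j : Fin e} (h : ρ.a (j + 1) * ρ.a j = 0)
    (i : Fin e) : cyc ρ i * cyc ρ i = 0 := by
  have hj : i + Fin.ofNat e (j - i).val = j := by simp
  rw [cyc_mul_self]
  refine prod_map_reverse_range_eq_zero _ (l := (j - i).val) ?_ ?_
  · have := (j - i).isLt
    omega
  · rw [Fin.ofNat_add_one, ← add_assoc, hj]
    exact h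

end CyclicProducts

section Coordinates

variable {m : ℕ} {W : Type} [AddCommGroup W] [Module R W]

lemma mk1_apply (src dst : Fin m) (g : W →ₗ[R] W) (x : Fin m → W) (r : Fin m) :
    mk1 src dst g x r = if r = dst then g (x src) else 0 := rfl

lemma prj_apply (S : Fin m → Prop) [DecidablePred S] (x : Fin m → W) (r : Fin m) :
    prj (R := R) S x r = if S r then x r else 0 := rfl

lemma mk1_mul_mk1_of_ne {s₁ d₁ s₂ d₂ : Fin m} (g₁ g₂ : W →ₗ[R] W) (h : s₂ ≠ d₁) :
    (mk1 s₂ d₂ g₂ : Module.End R (Fin m → W)) * mk1 s₁ d₁ g₁ = 0 := by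
  refine LinearMap.ext fun x => funext fun r => ?_
  simp [mk1_apply, h]

lemma prj_mul_mk1_mul_prj {S T : Fin m → Prop} [DecidablePred S] [DecidablePred T]
    {src dst : Fin m} (g : W →ₗ[R] W) (hS : S dst) (hT : T src) :
    (prj S : Module.End R (Fin m → W)) * mk1 src dst g * prj T = mk1 src dst g := by
  refine LinearMap.ext fun x => funext fun r => ?_
  by_cases h : r = dst <;> simp [mk1_apply, prj_apply, h, hS, hT]

variable {ι : Type} [DecidableEq ι] (g : Fin m → ι)

lemma prj_fiber_mul_prj_fiber_of_ne {i j : ι} (hij : i ≠ j) :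
    (prj (fun r => g r = i) : Module.End R (Fin m → W)) * prj (fun r => g r = j) = 0 := by
  refine LinearMap.ext fun x => funext fun r => ?_
  by_cases h : g r = i <;> simp [prj_apply, h, hij]

lemma prj_mul_self (S : Fin m → Prop) [DecidablePred S] :
    (prj S : Module.End R (Fin m → W)) * prj S = prj S := by
  refine LinearMap.ext fun x => funext fun r => ?_
  by_cases h : S r <;> simp [prj_apply, h]

lemma sum_prj_fiber [Fintype ι] :
    ∑ i, (prj (fun r => g r = i) : Module.End R (Fin m → W)) = 1 := by
  refine LinearMap.ext fun x => funext fun r => ?_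
  simp [LinearMap.sum_apply, prj_apply, Finset.sum_apply]

end Coordinates

section Mdef

lemma sndRow_ne_lastRow (he : 2 ≤ e) : sndRow e ≠ lastRow e := by
  simp only [sndRow, lastRow, ne_eq, Fin.ext_iff]
  omega

variable [NeZero e]

lemma vrt_of_lt {r : Fin (e + 1)} (h : r.val < e - 1) : vrt e r = ⟨r.val, by omega⟩ :=
  dif_pos h

lemma vrt_of_le {r : Fin (e + 1)} (h : e - 1 ≤ r.val) : vrt e r = ve e :=
  dif_neg (by omega)

lemma vrt_sndRow : vrt e (sndRow e) = ve e :=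
  vrt_of_le le_rfl

lemma vrt_lastRow : vrt e (lastRow e) = ve e :=
  vrt_of_le (Nat.sub_le e 1)

lemma ve_add_one : ve e + 1 = ⟨0, Nat.pos_of_neZero e⟩ := by
  ext
  simp [ve, Fin.val_add, Nat.sub_add_cancel NeZero.one_le]

lemma vem_add_one (he : 2 ≤ e) : vem e + 1 = ve e := by
  ext
  simp only [vem, ve, Fin.val_add, Fin.val_one', Nat.mod_eq_of_lt (by omega : 1 < e)]
  rw [Nat.mod_eq_of_lt (by omega)]
  omega

lemma add_one_of_lt {i : Fin e} (h : i.val < e - 2) : i + 1 = ⟨i.val + 1, by omega⟩ := by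
  ext
  simp only [Fin.val_add, Fin.val_one', Nat.mod_eq_of_lt (by omega : 1 < e)]
  exact Nat.mod_eq_of_lt (by omega)

lemma eq_ve_or_eq_vem_or_lt (i : Fin e) : i = ve e ∨ i = vem e ∨ i.val < e - 2 := by
  simp only [Fin.ext_iff, ve, vem]
  omega

lemma Mdef_a_ve (he : 2 ≤ e) (t : R) :
    (Mdef R e t).a (ve e) = mk1 (sndRow e) ⟨0, by omega⟩ LinearMap.id :=
  if_pos rfl

lemma Mdef_a_vem (he : 2 ≤ e) (t : R) :
    (Mdef R e t).a (vem e) = mk1 ⟨e - 2, by omega⟩ (lastRow e) (t • LinearMap.id) :=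
  (if_neg (by simp only [vem]; omega)).trans (if_pos rfl)

lemma Mdef_a_of_lt (t : R) {i : Fin e} (h : i.val < e - 2) :
    (Mdef R e t).a i = mk1 ⟨i.val, by omega⟩ ⟨i.val + 1, by omega⟩ LinearMap.id :=
  (if_neg (by omega)).trans (if_neg (by omega))

lemma Mdef_a_eq_v_mul_a_mul_v (he : 2 ≤ e) (t : R) (i : Fin e) :
    (Mdef R e t).a i = (Mdef R e t).v (i + 1) * (Mdef R e t).a i * (Mdef R e t).v i := by
  rcases eq_ve_or_eq_vem_or_lt i with rfl | rfl | hi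
  · rw [Mdef_a_ve he]
    symm
    refine prj_mul_mk1_mul_prj _ ?_ vrt_sndRow
    rw [vrt_of_lt (by dsimp only; omega), ve_add_one]
  · rw [Mdef_a_vem he]
    symm
    refine prj_mul_mk1_mul_prj _ (by rw [vrt_lastRow, vem_add_one he]) ?_
    rw [vrt_of_lt (by dsimp only; omega)]
    rfl
  · rw [Mdef_a_of_lt t hi]
    symm
    refine prj_mul_mk1_mul_prj _ ?_ ?_
    · rw [vrt_of_lt (by dsimp only; omega), add_one_of_lt hi]
    · rw [vrt_of_lt (by dsimp only; omega)]

lemma Mdef_d_eq_v_mul_d_mul_v (t : R) :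
    (Mdef R e t).d = (Mdef R e t).v (ve e) * (Mdef R e t).d * (Mdef R e t).v (ve e) := by
  symm
  exact prj_mul_mk1_mul_prj _ vrt_lastRow vrt_sndRow

theorem satisfies_Mdef (he : 2 ≤ e) (t : R) : Satisfies (Mdef R e t) := by
  have hz : (Mdef R e t).a (vem e + 1) * (Mdef R e t).a (vem e) = 0 := by
    rw [vem_add_one he, Mdef_a_ve he, Mdef_a_vem he]
    exact mk1_mul_mk1_of_ne _ _ (sndRow_ne_lastRow he)
  have hd : (Mdef R e t).d * (Mdef R e t).d = 0 := mk1_mul_mk1_of_ne _ _ (sndRow_ne_lastRow he)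
  refine ⟨fun i j => prj_fiber_mul_prj_fiber_of_ne _, fun i => prj_mul_self _,
    sum_prj_fiber _, Mdef_a_eq_v_mul_a_mul_v he t, Mdef_d_eq_v_mul_d_mul_v t, ?_, ?_, ?_, ?_⟩
  · rw [Mdef_a_vem he]
    exact mk1_mul_mk1_of_ne _ _ (sndRow_ne_lastRow he)
  · rw [Mdef_a_ve he]
    exact mk1_mul_mk1_of_ne _ _ (sndRow_ne_lastRow he)
  · rw [hd, cyc_mul_self_eq_zero _ hz]
  · intro i hi
    rw [cyc_eq_zero_of_ne _ hz (by rwa [vem_add_one he]), zero_mul, mul_zero]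

end Mdef

section BaseChange

variable [NeZero e] {S : Type} [CommRing S] (φ : R →+* S)

lemma comp_Mdef_v (t : R) (s : S) (i : Fin e) (x : Fin (e + 1) → R) :
    φ ∘ (Mdef R e t).v i x = (Mdef S e s).v i (φ ∘ x) := by
  funext r
  by_cases h : vrt e r = i <;> simp [prj_apply, h]

lemma comp_Mdef_a {t : R} {s : S} (hs : φ t = s) (i : Fin e) (x : Fin (e + 1) → R) :
    φ ∘ (Mdef R e t).a i x = (Mdef S e s).a i (φ ∘ x) := by
  subst hs
  funext r
  simp only [Mdef]
  split_ifs <;> simp [mk1_apply, apply_ite φ]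

lemma comp_Mdef_d (t : R) (s : S) (x : Fin (e + 1) → R) :
    φ ∘ (Mdef R e t).d x = (Mdef S e s).d (φ ∘ x) := by
  funext r
  simp [mk1_apply, apply_ite φ]

end BaseChange

lemma comp_constantCoeff_eq_zero_iff {ι : Type} (x : ι → PowerSeries R) :
    PowerSeries.constantCoeff ∘ x = 0 ↔ ∃ y, x = (PowerSeries.X : PowerSeries R) • y := by
  simp only [funext_iff, Function.comp_apply, Pi.zero_apply, ← PowerSeries.X_dvd_iff,
    Pi.smul_apply, smul_eq_mul, Dvd.dvd]
  exact Classical.skolem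

lemma not_injective_of_mem_homSet_Mdef_zero [NeZero e] (he : 2 ≤ e) {t : R} (ht : t ≠ 0)
    {f : (Fin (e + 1) → R) →ₗ[R] (Fin (e + 1) → R)}
    (hf : f ∈ homSet (Mdef R e t) (Mdef R e 0)) : ¬ Function.Injective f := by
  intro hinj
  set x : Fin (e + 1) → R := Pi.single ⟨e - 2, by omega⟩ 1
  have hcomm := LinearMap.congr_fun (hf.2.1 (vem e)) x
  rw [LinearMap.comp_apply, LinearMap.comp_apply, Mdef_a_vem he, Mdef_a_vem he, zero_smul]
    at hcomm
  have hzero : mk1 ⟨e - 2, by omega⟩ (lastRow e) (t • LinearMap.id) x = 0 := hinj <| by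
    rw [map_zero, hcomm]
    funext r
    simp [mk1_apply]
  exact ht (by simpa [x, mk1_apply] using congr_fun hzero (lastRow e))

lemma th2_ne_zero (k : Type) [Field k] : th2 k ≠ 0 := by
  rw [th2, Ne, Ideal.Quotient.eq_zero_iff_mem, Ideal.mem_span_singleton,
    Polynomial.X_pow_dvd_iff]
  intro h
  simpa using h 1 one_lt_two

/-- The free `k[[t]]`-module `M` with basis `m_1, …, m_{e+1}`
and structure maps `α_j(m_j) = m_{j+1}` (`j ≤ e-2`), `α_{e-1}(m_{e-1}) = t·m_{e+1}`,
`α_e(m_e) = m_1`, `δ(m_e) = m_{e+1}` (here `Mdef k[[t]] e t`) satisfies the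
defining relations of `Λ_e`; `M/tM ≅ W`; and `M/t²M` (here `Mdef (k[t]/(t²)) e t`)
is not isomorphic to the trivial lift `(k[t]/(t²)) ⊗ W`. -/
theorem lift_of_W (k : Type) [Field k] (e : ℕ) (he : 2 ≤ e) [NeZero e] :
    (Satisfies (Mdef (PowerSeries k) e PowerSeries.X) ∧
      Module.Free (PowerSeries k) (Mdef (PowerSeries k) e PowerSeries.X).V) ∧
    (∃ π : (Mdef (PowerSeries k) e PowerSeries.X).V →+ (Mdef k e 0).V,
      Function.Surjective π ∧
      (∀ x, π x = 0 ↔ ∃ y, x = (PowerSeries.X : PowerSeries k) • y) ∧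
      (∀ (c : k) x, π ((PowerSeries.C c) • x) = c • π x) ∧
      (∀ i x, π ((Mdef (PowerSeries k) e PowerSeries.X).v i x) = (Mdef k e 0).v i (π x)) ∧
      (∀ i x, π ((Mdef (PowerSeries k) e PowerSeries.X).a i x) = (Mdef k e 0).a i (π x)) ∧
      (∀ x, π ((Mdef (PowerSeries k) e PowerSeries.X).d x) = (Mdef k e 0).d (π x))) ∧
    (¬ ∃ f ∈ homSet (Mdef (Rtwo k) e (th2 k)) (Mdef (Rtwo k) e 0),
      Function.Bijective f) := by
  refine ⟨⟨satisfies_Mdef he _, inferInstance⟩, ?_, ?_⟩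
  · set φ := (PowerSeries.constantCoeff : PowerSeries k →+* k)
    refine ⟨(φ.compLeft _).toAddMonoidHom, PowerSeries.constantCoeff_surj.comp_left,
      comp_constantCoeff_eq_zero_iff, fun c x => ?_, comp_Mdef_v φ PowerSeries.X 0,
      comp_Mdef_a φ PowerSeries.constantCoeff_X, comp_Mdef_d φ PowerSeries.X 0⟩
    funext r
    simp [φ]
  · rintro ⟨f, hf, hbij⟩
    exact not_injective_of_mem_homSet_Mdef_zero he (th2_ne_zero k) hf hbij.injective

end GBTA
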